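/- Let n, m, p ∈ ℕ with p > n and p > m, and let s = (s_x,s_y), t = (t_x,t_y) be distinct vertices of the n×m grid graph G_{n×m} with s_x ≤ t_x and s_y ≤ t_y. Then every family of p s-t paths in G_{n×m} has at least (t_x − s_x) + (t_y − s_y) shared edges, i.e., at least as many shared edges as the graph distance between s and t. -/

import Mathlib

/-- The `n × m` grid graph: vertices are pairs `(x, y)` of naturals with `x < n`
and `y < m`, and two vertices are adjacent iff they are at Manhattan distance 1. -/
def gridGraph (n m : ℕ) : SimpleGraph (ℕ × ℕ) where
  Adj u v := u.1 < n ∧ u.2 < m ∧ v.1 < n ∧ v.2 < m ∧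
    ((u.1 : ℤ) - v.1).natAbs + ((u.2 : ℤ) - v.2).natAbs = 1
  symm := by
    constructor
    rintro u v ⟨h1, h2, h3, h4, h5⟩
    exact ⟨h3, h4, h1, h2, by omega⟩
  loopless := by
    constructor
    rintro u ⟨-, -, -, -, h⟩
    omega

/-- The set of shared edges of a family of `s`-`t` walks (an edge is shared if it
occurs in two walks with distinct indices). -/
def sharedEdges {V : Type*} {G : SimpleGraph V} {s t : V} {p : ℕ}
    (P : Fin p → G.Walk s t) : Set (Sym2 V) :=
  {e | ∃ i j, i ≠ j ∧ e ∈ (P i).edges ∧ e ∈ (P j).edges}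

/-!
Every `s`-`t` walk must cross each cut between column `x` and column `x + 1` with
`s.1 ≤ x < t.1`, and the only edges across it are the `m` horizontal edges
`(x, y) — (x + 1, y)`. With `p > m` walks, two of them use the same such edge, so every
column cut carries a shared edge; symmetrically every row cut `s.2 ≤ y < t.2` does
(using `p > n`). Edges across different cuts are different, which gives
`(t.1 - s.1) + (t.2 - s.2)` distinct shared edges.
-/

open SimpleGraph

section SharedEdges

variable {V : Type*} {G : SimpleGraph V} {s t : V} {p : ℕ}

theorem sharedEdges_finite (P : Fin p → G.Walk s t) : (sharedEdges P).Finite :=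
  (Set.finite_iUnion fun i => (P i).edges.finite_toSet).subset
    fun _ ⟨i, _, _, hi, _⟩ => Set.mem_iUnion.mpr ⟨i, hi⟩

theorem exists_mem_sharedEdges_of_lt {m : ℕ} (P : Fin p → G.Walk s t) (e : ℕ → Sym2 V)
    (hm : m < p) (h : ∀ i, ∃ k < m, e k ∈ (P i).edges) : ∃ k, e k ∈ sharedEdges P := by
  choose k hk hmem using h
  obtain ⟨i, j, hij, hkij⟩ :=
    Fintype.exists_ne_map_eq_of_card_lt (fun i => (⟨k i, hk i⟩ : Fin m)) (by simpa using hm)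
  rw [Fin.mk.injEq] at hkij
  exact ⟨k i, i, j, hij, hmem i, hkij ▸ hmem j⟩

end SharedEdges

/-- `inl x` is the cut between columns `x` and `x + 1`, crossed at height `k`;
`inr y` is the cut between rows `y` and `y + 1`, crossed at abscissa `k`. -/
def gridCutEdge : ℕ ⊕ ℕ → ℕ → Sym2 (ℕ × ℕ)
  | .inl x, k => s((x, k), (x + 1, k))
  | .inr y, k => s((k, y), (k, y + 1))

def gridCuts (s t : ℕ × ℕ) : Finset (ℕ ⊕ ℕ) :=
  (Finset.Ico s.1 t.1).disjSum (Finset.Ico s.2 t.2)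

theorem card_gridCuts (s t : ℕ × ℕ) :
    (gridCuts s t).card = (t.1 - s.1) + (t.2 - s.2) := by
  simp only [gridCuts, Finset.card_disjSum, Nat.card_Ico]

theorem eq_of_gridCutEdge_eq {c c' : ℕ ⊕ ℕ} {k k' : ℕ}
    (h : gridCutEdge c k = gridCutEdge c' k') : c = c' := by
  rcases c with x | y <;> rcases c' with x' | y' <;>
    simp only [gridCutEdge, Sym2.eq_iff, Prod.mk.injEq, Sum.inl.injEq, Sum.inr.injEq,
      reduceCtorEq] at h ⊢ <;> omega

section Crossing

variable {n m : ℕ} {a b : ℕ × ℕ}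

theorem exists_gridCutEdge_inl_mem_edges (W : (gridGraph n m).Walk a b) {x : ℕ}
    (ha : a.1 ≤ x) (hb : x < b.1) : ∃ k < m, gridCutEdge (.inl x) k ∈ W.edges := by
  obtain ⟨d, hd, hfst, hsnd⟩ := W.exists_boundary_dart {v | v.1 ≤ x} ha (by simpa using hb)
  obtain ⟨-, hk, -, -, hadj⟩ := d.adj
  replace hfst : d.fst.1 ≤ x := hfst
  replace hsnd : x < d.snd.1 := not_le.mp hsnd
  have hedge : d.edge = gridCutEdge (.inl x) d.fst.2 := by
    have hu : d.fst = (x, d.fst.2) := Prod.ext (by omega) rfl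
    have hv : d.snd = (x + 1, d.fst.2) := Prod.ext (by omega) (by omega)
    rw [Dart.edge, gridCutEdge, ← hu, ← hv]
  exact ⟨d.fst.2, hk, hedge ▸ List.mem_map_of_mem hd⟩

theorem exists_gridCutEdge_inr_mem_edges (W : (gridGraph n m).Walk a b) {y : ℕ}
    (ha : a.2 ≤ y) (hb : y < b.2) : ∃ k < n, gridCutEdge (.inr y) k ∈ W.edges := by
  obtain ⟨d, hd, hfst, hsnd⟩ := W.exists_boundary_dart {v | v.2 ≤ y} ha (by simpa using hb)
  obtain ⟨hk, -, -, -, hadj⟩ := d.adj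
  replace hfst : d.fst.2 ≤ y := hfst
  replace hsnd : y < d.snd.2 := not_le.mp hsnd
  have hedge : d.edge = gridCutEdge (.inr y) d.fst.1 := by
    have hu : d.fst = (d.fst.1, y) := Prod.ext rfl (by omega)
    have hv : d.snd = (d.fst.1, y + 1) := Prod.ext (by omega) (by omega)
    rw [Dart.edge, gridCutEdge, ← hu, ← hv]
  exact ⟨d.fst.1, hk, hedge ▸ List.mem_map_of_mem hd⟩

theorem exists_gridCutEdge_mem_sharedEdges {p : ℕ} (hn : n < p) (hm : m < p) {s t : ℕ × ℕ}
    (P : Fin p → (gridGraph n m).Walk s t) {c : ℕ ⊕ ℕ} (hc : c ∈ gridCuts s t) :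
    ∃ k, gridCutEdge c k ∈ sharedEdges P := by
  rcases c with x | y <;> simp only [gridCuts, Finset.inl_mem_disjSum, Finset.inr_mem_disjSum,
    Finset.mem_Ico] at hc
  · exact exists_mem_sharedEdges_of_lt P _ hm
      fun i => exists_gridCutEdge_inl_mem_edges (P i) hc.1 hc.2
  · exact exists_mem_sharedEdges_of_lt P _ hn
      fun i => exists_gridCutEdge_inr_mem_edges (P i) hc.1 hc.2

end Crossing

theorem stmt4_general (n m p : ℕ) (hn : n < p) (hm : m < p)
    (s t : ℕ × ℕ)
    (P : Fin p → (gridGraph n m).Walk s t) :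
    (t.1 - s.1) + (t.2 - s.2) ≤ (sharedEdges P).ncard := by
  choose! k hk using fun c (hc : c ∈ gridCuts s t) =>
    exists_gridCutEdge_mem_sharedEdges hn hm P hc
  let F := (gridCuts s t).image fun c => gridCutEdge c (k c)
  have hF : F.card = (t.1 - s.1) + (t.2 - s.2) := by
    rw [Finset.card_image_of_injOn fun _ _ _ _ h => eq_of_gridCutEdge_eq h, card_gridCuts]
  have hFshared : (F : Set (Sym2 (ℕ × ℕ))) ⊆ sharedEdges P := by
    rintro _ he
    obtain ⟨c, hc, rfl⟩ := Finset.mem_image.mp he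
    exact hk c hc
  calc (t.1 - s.1) + (t.2 - s.2) = (F : Set (Sym2 (ℕ × ℕ))).ncard := by
        rw [Set.ncard_coe_finset, hF]
    _ ≤ (sharedEdges P).ncard := Set.ncard_le_ncard hFshared (sharedEdges_finite P)

/-- On a `p`-small grid (`p > n`, `p > m`), every family of `p` `s`-`t` paths
has at least `(t.1 - s.1) + (t.2 - s.2)` shared edges (which is the graph
distance between `s` and `t`). -/
theorem stmt4 (n m p : ℕ) (hn : n < p) (hm : m < p)
    (s t : ℕ × ℕ) (hst : s ≠ t)
    (hs : s.1 < n ∧ s.2 < m) (ht : t.1 < n ∧ t.2 < m)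
    (hx : s.1 ≤ t.1) (hy : s.2 ≤ t.2)
    (P : Fin p → (gridGraph n m).Walk s t) (hP : ∀ i, (P i).IsPath) :
    (t.1 - s.1) + (t.2 - s.2) ≤ (sharedEdges P).ncard :=
  stmt4_general n m p hn hm s t P
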